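/- Let G = (V, E) be a simple graph with vertices v₁, …, v_n, and for each i define the n-qubit Pauli string o_i by: the j-th entry of o_i is Z if j = i; X if j > i and {v_i, v_j} ∉ E; and I otherwise. Then a subset S ⊆ {1, …, n} indexes a family {o_i : i ∈ S} of pairwise commuting Pauli strings if and only if {v_i : i ∈ S} is a clique of G; consequently, the minimum number of parts in a partition of {o_1, …, o_n} into pairwise-commuting families equals the clique cover number of G. -/

import Mathlib

open Matrix Finset

inductive Pauli : Type
  | I | X | Y | Z
  deriving DecidableEq

instance instFintypePauli : Fintype Pauli :=
  ⟨{Pauli.I, Pauli.X, Pauli.Y, Pauli.Z}, fun x => by cases x <;> simp⟩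

noncomputable def Pauli.mat : Pauli → Matrix (Fin 2) (Fin 2) ℂ
  | .I => 1
  | .X => !![0, 1; 1, 0]
  | .Y => !![0, -Complex.I; Complex.I, 0]
  | .Z => !![1, 0; 0, -1]

/-- An `N`-qubit Pauli string: a function from qubit indices to single-qubit Paulis. -/
abbrev PauliString (N : ℕ) := Fin N → Pauli

/-- The `2^N × 2^N` matrix of a Pauli string, as the tensor (Kronecker) product of its
entries, with rows/columns indexed by `Fin N → Fin 2`. -/
noncomputable def Pmat {N : ℕ} (A : PauliString N) :
    Matrix (Fin N → Fin 2) (Fin N → Fin 2) ℂ :=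
  Matrix.of fun x y => ∏ j, (A j).mat (x j) (y j)

/-- The Pauli string `o_i` associated with vertex `v_i` of a graph `G` in the reduction
from MIN-CLIQUE-COVER: `Z` at index `i`, `X` at each index `j > i` with `{v_i, v_j} ∉ E`,
and `I` elsewhere. -/
def oStr {n : ℕ} (G : SimpleGraph (Fin n)) [DecidableRel G.Adj] (i : Fin n) :
    PauliString n := fun j =>
  if j = i then Pauli.Z
  else if i < j ∧ ¬ G.Adj i j then Pauli.X
  else Pauli.I

/-- The minimum number of parts in a partition of the finite set `T` of Pauli strings into
(nonempty) families of pairwise commuting strings. -/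
noncomputable def minCommParts {N : ℕ} (T : Finset (PauliString N)) : ℕ :=
  sInf {k | ∃ P : Finset (Finset (PauliString N)), P.card = k ∧
    (∀ S ∈ P, S.Nonempty) ∧
    (P : Set (Finset (PauliString N))).PairwiseDisjoint id ∧
    P.sup id = T ∧
    ∀ S ∈ P, ∀ A ∈ S, ∀ B ∈ S, Pmat A * Pmat B = Pmat B * Pmat A}

/-- The clique cover number of a graph on `Fin n`: the minimum number of (nonempty)
cliques needed to partition the vertex set. -/
noncomputable def cliqueCoverNum {n : ℕ} (G : SimpleGraph (Fin n)) : ℕ :=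
  sInf {k | ∃ P : Finset (Finset (Fin n)), P.card = k ∧
    (∀ S ∈ P, S.Nonempty) ∧
    (P : Set (Finset (Fin n))).PairwiseDisjoint id ∧
    P.sup id = Finset.univ ∧
    ∀ S ∈ P, G.IsClique (S : Set (Fin n))}

/-!
Pauli strings either commute or anticommute: `P_A P_B = (∏ⱼ ε(A j, B j)) P_B P_A`, where
`ε(p, q)` is `-1` exactly when `p, q` are distinct non-identity Paulis. Since every Pauli
string squares to the identity, anticommuting strings never commute. For `i < j`, the strings
`o_i` and `o_j` are both non-identity and distinct only at site `j`, where `o_j` has `Z` and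
`o_i` has `X` or `I` according as `v_i v_j` is a non-edge or an edge; so `o_i` and `o_j`
commute iff `v_i v_j ∈ E`. As `i ↦ o_i` is injective, partitions of `{o_i}` into commuting
families are the images of the partitions of the vertex set into cliques.
-/

namespace Pauli

def commSign (p q : Pauli) : ℂ := if p = I ∨ q = I ∨ p = q then 1 else -1

theorem mat_mul_mat (p q : Pauli) : p.mat * q.mat = commSign p q • (q.mat * p.mat) := by
  cases p <;> cases q <;> ext a b <;> fin_cases a <;> fin_cases b <;>
    simp [commSign, mat, Matrix.mul_apply, Fin.sum_univ_two]

theorem mat_mul_self (p : Pauli) : p.mat * p.mat = 1 := by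
  cases p <;> norm_num [mat, Matrix.mul_fin_two, ← Matrix.one_fin_two, Complex.I_mul_I]

end Pauli

section PauliString

variable {N : ℕ} (A B : PauliString N)

theorem Pmat_mul :
    Pmat A * Pmat B = Matrix.of fun x y => ∏ j, ((A j).mat * (B j).mat) (x j) (y j) := by
  ext x y
  simp only [Matrix.mul_apply, Pmat, Matrix.of_apply, prod_univ_sum, Fintype.piFinset_univ,
    prod_mul_distrib]

theorem Pmat_mul_self : Pmat A * Pmat A = 1 := by
  ext x y
  simp only [Pmat_mul, Pauli.mat_mul_self, Matrix.of_apply, Matrix.one_apply]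
  by_cases hxy : x = y
  · simp [hxy]
  · obtain ⟨j, hj⟩ := Function.ne_iff.mp hxy
    rw [if_neg hxy]
    exact prod_eq_zero (mem_univ j) (if_neg hj)

theorem Pmat_mul_eq_prod_commSign_smul :
    Pmat A * Pmat B = (∏ j, Pauli.commSign (A j) (B j)) • (Pmat B * Pmat A) := by
  rw [Pmat_mul, Pmat_mul]
  ext x y
  simp only [Matrix.of_apply, Matrix.smul_apply, smul_eq_mul, ← prod_mul_distrib]
  exact prod_congr rfl fun j _ => by
    rw [Pauli.mat_mul_mat (A j), Matrix.smul_apply, smul_eq_mul]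

theorem isUnit_Pmat : IsUnit (Pmat A) := ⟨⟨_, _, Pmat_mul_self A, Pmat_mul_self A⟩, rfl⟩

theorem not_commute_Pmat_of_anticommute (h : Pmat A * Pmat B = -(Pmat B * Pmat A)) :
    ¬ Commute (Pmat A) (Pmat B) := by
  intro hAB
  have hBA : Pmat B * Pmat A = 0 := by
    ext x y
    exact self_eq_neg.mp (congrFun (congrFun (hAB.eq ▸ h) x) y)
  exact not_isUnit_zero (hBA ▸ (isUnit_Pmat B).mul (isUnit_Pmat A))

end PauliString

def IsPartitionWith {α : Type*} [DecidableEq α] (p : Finset α → Prop) (T : Finset α)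
    (P : Finset (Finset α)) : Prop :=
  (∀ S ∈ P, S.Nonempty) ∧ (P : Set (Finset α)).PairwiseDisjoint id ∧ P.sup id = T ∧
    ∀ S ∈ P, p S

section IsPartitionWith

variable {α β : Type*} [DecidableEq β] (f : α ↪ β) {p : Finset β → Prop} {T : Finset α}

theorem exists_eq_map_of_isPartitionWith_map {P : Finset (Finset β)}
    (hP : IsPartitionWith p (T.map f) P) :
    ∃ Q : Finset (Finset α), P = Q.map (mapEmbedding f).toEmbedding := by
  suffices P ⊆ T.powerset.map (mapEmbedding f).toEmbedding by
    obtain ⟨Q, -, rfl⟩ := subset_map_iff.mp this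
    exact ⟨Q, rfl⟩
  intro S hS
  obtain ⟨u, hu, rfl⟩ := subset_map_iff.mp (hP.2.2.1 ▸ le_sup (f := id) hS)
  exact mem_map_of_mem _ (mem_powerset.mpr hu)

variable [DecidableEq α]

theorem isPartitionWith_map_iff {Q : Finset (Finset α)} :
    IsPartitionWith p (T.map f) (Q.map (mapEmbedding f).toEmbedding) ↔
      IsPartitionWith (p ∘ map f) T Q := by
  have hdisj : (Q.map (mapEmbedding f).toEmbedding : Set (Finset β)).PairwiseDisjoint id ↔
      (Q : Set (Finset α)).PairwiseDisjoint id := by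
    rw [coe_map, Set.InjOn.pairwiseDisjoint_image (mapEmbedding f).toEmbedding.injective.injOn]
    simp only [Set.PairwiseDisjoint, Set.Pairwise, Function.onFun, Function.comp_apply, id,
      RelEmbedding.coe_toEmbedding, mapEmbedding_apply, disjoint_map]
  have hsup : (Q.map (mapEmbedding f).toEmbedding).sup id = (Q.sup id).map f := by
    rw [sup_map]
    exact (apply_sup_eq_sup_comp _ (fun _ _ => map_union _ _) (map_empty f)).symm
  simp only [IsPartitionWith, forall_mem_map, RelEmbedding.coe_toEmbedding, mapEmbedding_apply,
    map_nonempty, hdisj, hsup, map_inj, Function.comp_apply]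

theorem setOf_card_isPartitionWith_map :
    {k | ∃ P, P.card = k ∧ IsPartitionWith p (T.map f) P} =
      {k | ∃ Q, Q.card = k ∧ IsPartitionWith (p ∘ map f) T Q} := by
  ext k
  constructor
  · rintro ⟨P, rfl, hP⟩
    obtain ⟨Q, rfl⟩ := exists_eq_map_of_isPartitionWith_map f hP
    exact ⟨Q, (card_map _).symm, (isPartitionWith_map_iff f).mp hP⟩
  · rintro ⟨Q, rfl, hQ⟩
    exact ⟨_, card_map _, (isPartitionWith_map_iff f).mpr hQ⟩

end IsPartitionWith

theorem minCommParts_eq_sInf {N : ℕ} (T : Finset (PauliString N)) :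
    minCommParts T = sInf {k | ∃ P, P.card = k ∧
      IsPartitionWith (fun S => ∀ A ∈ S, ∀ B ∈ S, Commute (Pmat A) (Pmat B)) T P} :=
  rfl

theorem cliqueCoverNum_eq_sInf {n : ℕ} (G : SimpleGraph (Fin n)) :
    cliqueCoverNum G =
      sInf {k | ∃ P, P.card = k ∧
        IsPartitionWith (fun S : Finset (Fin n) => G.IsClique (S : Set (Fin n))) univ P} :=
  rfl

section oStr

variable {n : ℕ} (G : SimpleGraph (Fin n)) [DecidableRel G.Adj]

theorem oStr_injective : Function.Injective (oStr G) := by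
  intro i j h
  by_contra hij
  have := congrFun h i
  simp only [oStr, if_neg hij] at this
  split_ifs at this

theorem commSign_oStr_of_lt {i j : Fin n} (hij : i < j) (k : Fin n) :
    Pauli.commSign (oStr G i k) (oStr G j k) =
      if k = j then (if G.Adj i j then 1 else -1) else 1 := by
  unfold oStr Pauli.commSign
  split_ifs <;> simp_all [lt_asymm]

theorem Pmat_oStr_mul_of_lt {i j : Fin n} (hij : i < j) :
    Pmat (oStr G i) * Pmat (oStr G j) =
      (if G.Adj i j then 1 else -1 : ℂ) • (Pmat (oStr G j) * Pmat (oStr G i)) := by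
  rw [Pmat_mul_eq_prod_commSign_smul, prod_congr rfl fun k _ => commSign_oStr_of_lt G hij k,
    prod_ite_eq' univ j, if_pos (mem_univ j)]

theorem commute_Pmat_oStr_iff_of_lt {i j : Fin n} (hij : i < j) :
    Commute (Pmat (oStr G i)) (Pmat (oStr G j)) ↔ G.Adj i j := by
  have h := Pmat_oStr_mul_of_lt G hij
  by_cases hadj : G.Adj i j
  · rw [if_pos hadj, one_smul] at h
    exact iff_of_true h hadj
  · rw [if_neg hadj, neg_one_smul] at h
    exact iff_of_false (not_commute_Pmat_of_anticommute _ _ h) hadj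

theorem commute_Pmat_oStr_iff {i j : Fin n} (hij : i ≠ j) :
    Commute (Pmat (oStr G i)) (Pmat (oStr G j)) ↔ G.Adj i j := by
  rcases hij.lt_or_gt with h | h
  · exact commute_Pmat_oStr_iff_of_lt G h
  · rw [Commute.symm_iff, G.adj_comm]
    exact commute_Pmat_oStr_iff_of_lt G h

theorem forall_commute_Pmat_oStr_iff_isClique (S : Finset (Fin n)) :
    (∀ i ∈ S, ∀ j ∈ S, Commute (Pmat (oStr G i)) (Pmat (oStr G j))) ↔
      G.IsClique (S : Set (Fin n)) := by
  constructor
  · exact fun h i hi j hj hij => (commute_Pmat_oStr_iff G hij).mp (h i hi j hj)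
  · intro h i hi j hj
    rcases eq_or_ne i j with rfl | hij
    · exact Commute.refl _
    · exact (commute_Pmat_oStr_iff G hij).mpr (h hi hj hij)

end oStr

/-- In the reduction from MIN-CLIQUE-COVER: a subset `S` of vertices indexes a pairwise
commuting family `{o_i : i ∈ S}` iff it is a clique of `G`; consequently the minimum
number of pairwise-commuting parts needed to partition `{o_1, …, o_n}` equals the clique
cover number of `G`. -/
theorem oStr_clique_iff_and_min_partition_eq_clique_cover {n : ℕ}
    (G : SimpleGraph (Fin n)) [DecidableRel G.Adj] :
    (∀ S : Finset (Fin n),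
      ((∀ i ∈ S, ∀ j ∈ S,
          Pmat (oStr G i) * Pmat (oStr G j) = Pmat (oStr G j) * Pmat (oStr G i)) ↔
        G.IsClique (S : Set (Fin n)))) ∧
    minCommParts (Finset.univ.image (oStr G)) = cliqueCoverNum G := by
  refine ⟨forall_commute_Pmat_oStr_iff_isClique G, ?_⟩
  let e : Fin n ↪ PauliString n := ⟨oStr G, oStr_injective G⟩
  have hclique : (fun S => ∀ A ∈ S, ∀ B ∈ S, Commute (Pmat A) (Pmat B)) ∘ map e =
      fun C : Finset (Fin n) => G.IsClique (C : Set (Fin n)) :=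
    funext fun C => propext <| by
      simp only [Function.comp_apply, forall_mem_map]
      exact forall_commute_Pmat_oStr_iff_isClique G C
  rw [minCommParts_eq_sInf, show univ.image (oStr G) = univ.map e from (map_eq_image e univ).symm,
    setOf_card_isPartitionWith_map, hclique, cliqueCoverNum_eq_sInf]
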